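/- arXiv:2207.12663 — 3 statements merged into one kernel-verified Lean document; each statement's English description precedes it below -/
import Mathlib

section
/- Let Γ be the star-shaped graph with one central vertex of weight -b and n arms, where the i-th arm is a linear chain with weights -b_{i1}, ..., -b_{i r_i} (all b_{ij} ≥ 2, the vertex weighted -b_{i1} adjacent to the center). Let M(Γ) be the associated symmetric matrix (diagonal entries the weights, off-diagonal entries 1 for adjacent vertices, 0 otherwise). For each arm, let α_i be the numerator of [b_{i1},...,b_{i r_i}] and β_i the numerator of [b_{i2},...,b_{i r_i}] (β_i = 1 if r_i = 1). Then det(-M(Γ)) = b·α_1···α_n - Σ_{i=1}^n β_i · Π_{j ≠ i} α_j. -/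
namespace Stmt8Aux
open Matrix

def trid (f : ℕ → ℚ) (m : ℕ) : Matrix (Fin m) (Fin m) ℚ :=
  Matrix.of fun i j =>
    if (i : ℕ) = (j : ℕ) then f ((i : ℕ) + 1)
    else if (i : ℕ) + 1 = (j : ℕ) ∨ (j : ℕ) + 1 = (i : ℕ) then -1 else 0

def cont (f : ℕ → ℚ) : ℕ → ℚ
  | 0 => 1
  | 1 => f 1
  | (m+2) => f (m+2) * cont f (m+1) - cont f m

lemma trid_submatrix (f : ℕ → ℚ) (m : ℕ) :
    (trid f (m+1)).submatrix Fin.succ Fin.succ = trid (fun k => f (k+1)) m := by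
  ext i j
  simp only [trid, submatrix_apply, of_apply, Fin.val_succ]
  by_cases h : (i : ℕ) = (j : ℕ)
  · simp [h]
  · rw [if_neg (by omega), if_neg h]
    by_cases h2 : (i : ℕ) + 1 = (j : ℕ) ∨ (j : ℕ) + 1 = (i : ℕ)
    · rw [if_pos (by omega), if_pos h2]
    · rw [if_neg (by omega), if_neg h2]

lemma cont_shift (m : ℕ) (f : ℕ → ℚ) :
    cont f (m+2) = f 1 * cont (fun k => f (k+1)) (m+1) - cont (fun k => f (k+2)) m := by
  induction m using Nat.twoStepInduction with
  | zero => simp [cont]; ring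
  | one => simp [cont]; ring
  | more m ih1 ih2 =>
    have e1 : cont f (m+2+2) = f (m+4) * cont f (m+3) - cont f (m+2) := rfl
    rw [e1, ih1, ih2]
    have e2 : cont (fun k => f (k+1)) (m+2+1) =
        f (m+4) * cont (fun k => f (k+1)) (m+2) - cont (fun k => f (k+1)) (m+1) := rfl
    have e3 : cont (fun k => f (k+2)) (m+2) =
        f (m+4) * cont (fun k => f (k+2)) (m+1) - cont (fun k => f (k+2)) m := rfl
    rw [e2, e3]; ring

lemma det_trid : ∀ (m : ℕ) (f : ℕ → ℚ), (trid f m).det = cont f m := by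
  intro m
  induction m using Nat.twoStepInduction with
  | zero => intro f; simp [cont, Matrix.det_isEmpty]
  | one => intro f; simp [cont, Matrix.det_fin_one, trid]
  | more m ih1 ih2 =>
    intro f
    set A := trid f (m+2) with hA
    have h00 : A 0 0 = f 1 := by simp [hA, trid]
    have h01 : A 0 1 = -1 := by simp [hA, trid, Fin.val_one]
    have h0j : ∀ j : Fin m, A 0 j.succ.succ = 0 := by
      intro j
      have hv : ((j.succ.succ : Fin (m+2)) : ℕ) = (j : ℕ) + 2 := by simp [Fin.val_succ]
      simp only [hA, trid, of_apply, hv, Fin.val_zero]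
      rw [if_neg (by omega), if_neg (by omega)]
    have hminor0 : A.submatrix Fin.succ Fin.succ = trid (fun k => f (k+1)) (m+1) :=
      trid_submatrix f (m+1)
    have h10 : (1 : Fin (m+2)).succAbove 0 = 0 := by
      rw [Fin.succAbove_of_castSucc_lt]
      · simp
      · simp [Fin.lt_def]
    set B := A.submatrix Fin.succ ((1 : Fin (m+2)).succAbove) with hB
    have hB0 : B 0 0 = -1 := by
      simp only [hB, submatrix_apply, h10]
      simp [hA, trid, Fin.val_succ]
    have hBi : ∀ i : Fin m, B i.succ 0 = 0 := by
      intro i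
      simp only [hB, submatrix_apply, h10]
      have hv : ((i.succ.succ : Fin (m+2)) : ℕ) = (i : ℕ) + 2 := by simp [Fin.val_succ]
      simp only [hA, trid, of_apply, hv, Fin.val_zero]
      rw [if_neg (by omega), if_neg (by omega)]
    have hBminor : B.submatrix ((0 : Fin (m+1)).succAbove) Fin.succ
        = trid (fun k => f (k+2)) m := by
      have hsA : ∀ j : Fin m, (1 : Fin (m+2)).succAbove j.succ = j.succ.succ := by
        intro j
        rw [Fin.succAbove_of_le_castSucc]
        simp [Fin.le_def, Fin.val_succ]
      ext i j
      rw [Fin.succAbove_zero]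
      simp only [submatrix_apply, hsA]
      have h2 := congrFun (congrFun (trid_submatrix (fun k => f (k+1)) m) i) j
      simp only [submatrix_apply] at h2
      calc A i.succ.succ j.succ.succ
          = ((A.submatrix Fin.succ Fin.succ).submatrix Fin.succ Fin.succ) i j := rfl
        _ = trid (fun k => f (k+2)) m i j := by rw [hminor0]; simpa using h2
    have hdetB : B.det = -(cont (fun k => f (k+2)) m) := by
      rw [Matrix.det_succ_column_zero, Fin.sum_univ_succ]
      simp only [hB0, hBi, mul_zero, zero_mul, Finset.sum_const_zero, add_zero, Fin.val_zero,
        pow_zero, one_mul]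
      rw [hBminor, ih1 (fun k => f (k+2))]
      ring
    rw [Matrix.det_succ_row_zero, Fin.sum_univ_succ, Fin.sum_univ_succ]
    simp only [h0j, mul_zero, zero_mul, Finset.sum_const_zero, add_zero]
    rw [Fin.succ_zero_eq_one]
    simp only [Fin.val_zero, pow_zero, one_mul, h00, Fin.val_one, pow_one,
      Fin.succAbove_zero, hminor0, h01]
    rw [ih2 (fun k => f (k+1)), hdetB, cont_shift]
    ring


lemma det_updateRow_trid (m : ℕ) (f : ℕ → ℚ) :
    ((trid f (m+1)).updateRow 0 (Pi.single 0 1)).det = cont (fun k => f (k+1)) m := by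
  set A' := (trid f (m+1)).updateRow 0 (Pi.single 0 1) with hA'
  have h0 : ∀ j : Fin (m+1), A' 0 j = if j = 0 then 1 else 0 := by
    intro j
    rw [hA', Matrix.updateRow_self]
    by_cases h : j = 0
    · subst h; simp
    · rw [Pi.single_eq_of_ne h, if_neg h]
  rw [Matrix.det_succ_row_zero, Fin.sum_univ_succ]
  have hz : ∀ j : Fin m, A' 0 j.succ = 0 := by
    intro j; rw [h0]; simp [Fin.succ_ne_zero]
  simp only [hz, mul_zero, zero_mul, Finset.sum_const_zero, add_zero, h0, if_pos rfl,
    Fin.val_zero, pow_zero, one_mul, Fin.succAbove_zero]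
  have : A'.submatrix Fin.succ Fin.succ = (trid f (m+1)).submatrix Fin.succ Fin.succ := by
    ext i j
    simp only [submatrix_apply, hA']
    rw [Matrix.updateRow_ne (Fin.succ_ne_zero i)]
  rw [if_pos trivial, one_mul, this, trid_submatrix, det_trid]

lemma adjugate_trid (m : ℕ) (h : 0 < m) (f : ℕ → ℚ) :
    (trid f m).adjugate ⟨0, h⟩ ⟨0, h⟩ = cont (fun k => f (k+1)) (m-1) := by
  obtain ⟨m', rfl⟩ : ∃ m', m = m' + 1 := ⟨m - 1, by omega⟩
  have hz : (⟨0, h⟩ : Fin (m'+1)) = 0 := rfl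
  rw [hz, Matrix.adjugate_apply, det_updateRow_trid]
  simp

lemma cont_step (m : ℕ) (f : ℕ → ℚ) (hf : ∀ k, 1 ≤ k → k ≤ m+1 → 2 ≤ f k) :
    cont f m + 1 ≤ cont f (m+1) ∧ 1 ≤ cont f m := by
  induction m with
  | zero =>
    constructor
    · have := hf 1 le_rfl le_rfl
      simp only [cont]; linarith
    · simp [cont]
  | succ m ih =>
    obtain ⟨ih1, ih2⟩ := ih (fun k hk hk' => hf k hk (by omega))
    have hfm : 2 ≤ f (m+2) := hf (m+2) (by omega) le_rfl
    have e : cont f (m+2) = f (m+2) * cont f (m+1) - cont f m := rfl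
    constructor
    · rw [e]; nlinarith
    · linarith

lemma cont_one_le (m : ℕ) (f : ℕ → ℚ) (hf : ∀ k, 1 ≤ k → k ≤ m → 2 ≤ f k) :
    1 ≤ cont f m := by
  cases m with
  | zero => simp [cont]
  | succ m =>
    obtain ⟨h1, h2⟩ := cont_step m f hf
    linarith

end Stmt8Aux

/-- Determinant formula for the (negated) intersection matrix of the star-shaped plumbing
graph `Γ` with central weight `-b` and `n` arms with weights `-a_{i1}, ..., -a_{i r_i}`:
`det(-M(Γ)) = b·α_1···α_n - Σ_i β_i · Π_{j ≠ i} α_j`. -/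
theorem stmt_8 (n : ℕ) (b : ℤ) (r : Fin n → ℕ) (hr : ∀ i, 1 ≤ r i)
    (a : Fin n → ℕ → ℤ) (ha : ∀ i k, 1 ≤ k → k ≤ r i → 2 ≤ a i k)
    (p q : Fin n → ℕ → ℤ)
    (hp0 : ∀ i, p i 0 = 1) (hp1 : ∀ i, p i 1 = a i 1)
    (hp : ∀ i k, 2 ≤ k → k ≤ r i → p i k = a i k * p i (k - 1) - p i (k - 2))
    (hq1 : ∀ i, q i 1 = 1) (hq2 : ∀ i, 2 ≤ r i → q i 2 = a i 2)
    (hq : ∀ i k, 3 ≤ k → k ≤ r i → q i k = a i k * q i (k - 1) - q i (k - 2))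
    (M : Matrix (Unit ⊕ (Σ i : Fin n, Fin (r i))) (Unit ⊕ (Σ i : Fin n, Fin (r i))) ℤ)
    (hcc : M (Sum.inl ()) (Sum.inl ()) = -b)
    (hca : ∀ (i : Fin n) (j : Fin (r i)),
      M (Sum.inl ()) (Sum.inr ⟨i, j⟩) = if (j : ℕ) = 0 then 1 else 0)
    (hac : ∀ (i : Fin n) (j : Fin (r i)),
      M (Sum.inr ⟨i, j⟩) (Sum.inl ()) = if (j : ℕ) = 0 then 1 else 0)
    (hdiag : ∀ (i : Fin n) (j : Fin (r i)),
      M (Sum.inr ⟨i, j⟩) (Sum.inr ⟨i, j⟩) = -(a i ((j : ℕ) + 1)))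
    (hadj : ∀ (i : Fin n) (j k : Fin (r i)), (j : ℕ) + 1 = (k : ℕ) →
      M (Sum.inr ⟨i, j⟩) (Sum.inr ⟨i, k⟩) = 1 ∧ M (Sum.inr ⟨i, k⟩) (Sum.inr ⟨i, j⟩) = 1)
    (hfar : ∀ (i : Fin n) (j k : Fin (r i)), (j : ℕ) + 1 < (k : ℕ) →
      M (Sum.inr ⟨i, j⟩) (Sum.inr ⟨i, k⟩) = 0 ∧ M (Sum.inr ⟨i, k⟩) (Sum.inr ⟨i, j⟩) = 0)
    (hdiff : ∀ (i i' : Fin n) (j : Fin (r i)) (j' : Fin (r i')), i ≠ i' →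
      M (Sum.inr ⟨i, j⟩) (Sum.inr ⟨i', j'⟩) = 0) :
    (-M).det =
      b * ∏ i, p i (r i) - ∑ i, q i (r i) * ∏ j ∈ Finset.univ.erase i, p j (r j) := by
  classical
  set fA : Fin n → ℕ → ℚ := fun i t => ((a i t : ℤ) : ℚ) with hfA
  set d : ∀ i : Fin n, Matrix (Fin (r i)) (Fin (r i)) ℚ :=
    fun i => Stmt8Aux.trid (fA i) (r i) with hd
  -- p and q match the continuants
  have p_eq : ∀ i k, k ≤ r i → ((p i k : ℤ) : ℚ) = Stmt8Aux.cont (fA i) k := by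
    intro i k
    induction k using Nat.twoStepInduction with
    | zero => intro _; simp [hp0 i, Stmt8Aux.cont]
    | one => intro _; simp [hp1 i, Stmt8Aux.cont, hfA]
    | more k ih1 ih2 =>
      intro hk
      have e := hp i (k+2) (by omega) hk
      have e2 : Stmt8Aux.cont (fA i) (k+2)
          = fA i (k+2) * Stmt8Aux.cont (fA i) (k+1) - Stmt8Aux.cont (fA i) k := rfl
      rw [e2, ← ih1 (by omega), ← ih2 (by omega)]
      rw [show k + 2 - 1 = k + 1 by omega, show k + 2 - 2 = k by omega] at e
      rw [e]
      push_cast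
      ring
  have q_eq : ∀ i k, k + 1 ≤ r i →
      ((q i (k+1) : ℤ) : ℚ) = Stmt8Aux.cont (fun t => fA i (t+1)) k := by
    intro i k
    induction k using Nat.twoStepInduction with
    | zero => intro _; simp [hq1 i, Stmt8Aux.cont]
    | one => intro h; simp [hq2 i (by omega), Stmt8Aux.cont, hfA]
    | more k ih1 ih2 =>
      intro hk
      have e := hq i (k+3) (by omega) (by omega)
      have e2 : Stmt8Aux.cont (fun t => fA i (t+1)) (k+2)
          = fA i (k+3) * Stmt8Aux.cont (fun t => fA i (t+1)) (k+1)
            - Stmt8Aux.cont (fun t => fA i (t+1)) k := rfl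
      rw [e2, ← ih1 (by omega), ← ih2 (by omega)]
      rw [show k + 3 - 1 = k + 2 by omega, show k + 3 - 2 = k + 1 by omega] at e
      rw [show k + 2 + 1 = k + 3 by omega, e]
      push_cast
      ring
  have hfbound : ∀ i k, 1 ≤ k → k ≤ r i → (2:ℚ) ≤ fA i k := by
    intro i k h1 h2
    have h3 := ha i k h1 h2
    show (2:ℚ) ≤ ((a i k : ℤ) : ℚ)
    exact_mod_cast h3
  have hPQ : ∀ i, ((p i (r i) : ℤ) : ℚ) = Stmt8Aux.cont (fA i) (r i) := fun i => p_eq i _ le_rfl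
  have hPpos : ∀ i, (1:ℚ) ≤ ((p i (r i) : ℤ) : ℚ) := by
    intro i
    rw [hPQ i]
    exact Stmt8Aux.cont_one_le _ _ (hfbound i)
  have hPne : ∀ i, ((p i (r i) : ℤ) : ℚ) ≠ 0 := fun i => by linarith [hPpos i]
  have hdet_d : ∀ i, (d i).det = ((p i (r i) : ℤ) : ℚ) := by
    intro i
    rw [hd, Stmt8Aux.det_trid, hPQ i]
  set D : Matrix (Σ i : Fin n, Fin (r i)) (Σ i : Fin n, Fin (r i)) ℚ := Matrix.blockDiagonal' d with hD
  set Bb : Matrix Unit (Σ i : Fin n, Fin (r i)) ℚ := Matrix.of fun _ s => if (s.2 : ℕ) = 0 then (-1:ℚ) else 0 with hBb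
  set Cb : Matrix (Σ i : Fin n, Fin (r i)) Unit ℚ := Matrix.of fun s _ => if (s.2 : ℕ) = 0 then (-1:ℚ) else 0 with hCb
  set Ab : Matrix Unit Unit ℚ := Matrix.of fun _ _ => ((b:ℤ):ℚ) with hAb
  -- identify the mapped matrix with the block matrix
  have hN : (-M).map (fun x : ℤ => (x : ℚ)) = Matrix.fromBlocks Ab Bb Cb D := by
    ext s t
    rcases s with s | ⟨i, j⟩ <;> rcases t with t | ⟨i', j'⟩
    · simp only [Matrix.map_apply, Matrix.neg_apply, Matrix.fromBlocks_apply₁₁, hAb,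
        Matrix.of_apply]
      rw [hcc]; push_cast; ring
    · simp only [Matrix.map_apply, Matrix.neg_apply, Matrix.fromBlocks_apply₁₂, hBb,
        Matrix.of_apply]
      rw [hca i' j']
      split_ifs <;> push_cast <;> ring
    · simp only [Matrix.map_apply, Matrix.neg_apply, Matrix.fromBlocks_apply₂₁, hCb,
        Matrix.of_apply]
      rw [hac i j]
      split_ifs <;> push_cast <;> ring
    · simp only [Matrix.map_apply, Matrix.neg_apply, Matrix.fromBlocks_apply₂₂, hD]
      by_cases hii : i = i'
      · subst hii
        rw [Matrix.blockDiagonal'_apply_eq]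
        rw [hd]
        simp only [Stmt8Aux.trid, Matrix.of_apply]
        by_cases h1 : (j : ℕ) = (j' : ℕ)
        · have : j = j' := Fin.ext h1
          subst this
          rw [if_pos rfl, hdiag i j, hfA]
          push_cast; ring
        · rw [if_neg h1]
          by_cases h2 : (j : ℕ) + 1 = (j' : ℕ)
          · rw [if_pos (Or.inl h2), (hadj i j j' h2).1]; norm_num
          · by_cases h3 : (j' : ℕ) + 1 = (j : ℕ)
            · rw [if_pos (Or.inr h3), (hadj i j' j h3).2]; norm_num
            · rw [if_neg (by tauto)]
              rcases Nat.lt_or_ge (j : ℕ) (j' : ℕ) with h4 | h4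
              · rw [(hfar i j j' (by omega)).1]; norm_num
              · rw [(hfar i j' j (by omega)).2]; norm_num
      · rw [Matrix.blockDiagonal'_apply_ne d _ _ hii, hdiff i i' j j' hii]
        norm_num
  -- determinant of D
  have hDtri : D.BlockTriangular Sigma.fst := by
    rintro ⟨i, j⟩ ⟨i', j'⟩ hst
    exact Matrix.blockDiagonal'_apply_ne d _ _ (ne_of_gt hst)
  have hDdet : D.det = ∏ i, ((p i (r i) : ℤ) : ℚ) := by
    rw [Matrix.BlockTriangular.det_fintype hDtri]
    refine Finset.prod_congr rfl fun k _ => ?_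
    rw [← hdet_d k, ← Matrix.det_submatrix_equiv_self
      (⟨fun j => ⟨⟨k, j⟩, rfl⟩, fun s => s.2 ▸ s.1.2, fun j => rfl,
        by rintro ⟨⟨i, j⟩, rfl⟩; rfl⟩ :
        Fin (r k) ≃ {s : Σ i : Fin n, Fin (r i) // s.1 = k})]
    congr 1
    ext j j'
    simp only [Matrix.submatrix_apply, Matrix.toSquareBlock_def, Matrix.of_apply, hD,
      Equiv.coe_fn_mk]
    exact Matrix.blockDiagonal'_apply_eq d k j j'
  have hDdet_ne : D.det ≠ 0 := by
    rw [hDdet]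
    exact Finset.prod_ne_zero_iff.mpr fun i _ => hPne i
  haveI : Invertible D := D.invertibleOfIsUnitDet (isUnit_iff_ne_zero.mpr hDdet_ne)
  have hdetN : ((-M).map (fun x : ℤ => (x:ℚ))).det = D.det * (Ab - Bb * ⅟D * Cb).det := by
    rw [hN, Matrix.det_fromBlocks₂₂]
  rw [Matrix.invOf_eq_nonsing_inv] at hdetN
  have hDinv : D⁻¹ = Matrix.blockDiagonal' (fun i => (d i)⁻¹) := by
    apply Matrix.inv_eq_right_inv
    rw [hD, ← Matrix.blockDiagonal'_mul]
    rw [show (fun k => d k * (d k)⁻¹) = fun _ => (1 : Matrix _ _ ℚ) from funext fun k =>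
      Matrix.mul_nonsing_inv _ (isUnit_iff_ne_zero.mpr (by rw [hdet_d k]; exact hPne k))]
    exact Matrix.blockDiagonal'_one
  have key : ∀ g : (Σ i : Fin n, Fin (r i)) → ℚ,
      (∑ s : Σ i : Fin n, Fin (r i), (if (s.2 : ℕ) = 0 then (-1:ℚ) else 0) * g s)
        = ∑ i, -g ⟨i, ⟨0, hr i⟩⟩ := by
    intro g
    rw [← Finset.univ_sigma_univ, Finset.sum_sigma]
    refine Finset.sum_congr rfl fun i _ => ?_
    rw [Finset.sum_eq_single (⟨0, hr i⟩ : Fin (r i))]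
    · rw [if_pos rfl]
      exact neg_one_mul _
    · intro j _ hj
      rw [if_neg, zero_mul]
      intro h0
      exact hj (Fin.ext h0)
    · intro h
      exact absurd (Finset.mem_univ _) h
  have hBDC : (Bb * D⁻¹ * Cb) () ()
      = ∑ i, ((q i (r i) : ℤ):ℚ) / ((p i (r i):ℤ):ℚ) := by
    rw [Matrix.mul_apply]
    have h2 : ∀ t : Σ i : Fin n, Fin (r i), (Bb * D⁻¹) () t * Cb t ()
        = (if (t.2:ℕ) = 0 then (-1:ℚ) else 0) * (Bb * D⁻¹) () t := by
      intro t
      rw [mul_comm]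
      rfl
    simp only [h2]
    rw [key]
    have h3 : ∀ i, (Bb * D⁻¹) () ⟨i, ⟨0, hr i⟩⟩ = -((d i)⁻¹ ⟨0, hr i⟩ ⟨0, hr i⟩) := by
      intro i
      rw [Matrix.mul_apply]
      have h4 : ∀ s : Σ i : Fin n, Fin (r i), Bb () s * D⁻¹ s ⟨i, ⟨0, hr i⟩⟩
          = (if (s.2:ℕ)=0 then (-1:ℚ) else 0) * D⁻¹ s ⟨i, ⟨0, hr i⟩⟩ := fun s => rfl
      simp only [h4]
      rw [key (fun s => D⁻¹ s ⟨i, ⟨0, hr i⟩⟩), hDinv]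
      rw [Finset.sum_eq_single i]
      · rw [Matrix.blockDiagonal'_apply_eq]
      · intro i' _ hi'
        rw [Matrix.blockDiagonal'_apply_ne _ _ _ hi', neg_zero]
      · intro h
        exact absurd (Finset.mem_univ _) h
    simp only [h3, neg_neg]
    refine Finset.sum_congr rfl fun i _ => ?_
    rw [Matrix.inv_def, Matrix.smul_apply, Ring.inverse_eq_inv, hdet_d i]
    have h6 : (d i).adjugate ⟨0, hr i⟩ ⟨0, hr i⟩
        = Stmt8Aux.cont (fun t => fA i (t+1)) (r i - 1) := by
      rw [hd]
      exact Stmt8Aux.adjugate_trid (r i) (hr i) (fA i)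
    rw [h6]
    have h5 : Stmt8Aux.cont (fun t => fA i (t+1)) (r i - 1) = ((q i (r i) : ℤ):ℚ) := by
      have h7 := q_eq i (r i - 1) (by have := hr i; omega)
      rw [show r i - 1 + 1 = r i by have := hr i; omega] at h7
      exact h7.symm
    rw [h5, smul_eq_mul, div_eq_inv_mul]
  have hmap : (((-M).det : ℤ) : ℚ) = ((-M).map (fun x : ℤ => (x:ℚ))).det :=
    RingHom.map_det (Int.castRingHom ℚ) (-M)
  have hdetfinal : (((-M).det : ℤ) : ℚ) = (∏ i, ((p i (r i):ℤ):ℚ))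
      * (((b:ℤ):ℚ) - ∑ i, ((q i (r i):ℤ):ℚ) / ((p i (r i):ℤ):ℚ)) := by
    rw [hmap, hdetN, hDdet, Matrix.det_unique]
    have : (Ab - Bb * D⁻¹ * Cb) default default
        = ((b:ℤ):ℚ) - (Bb * D⁻¹ * Cb) () () := by
      rw [Matrix.sub_apply]
      rfl
    rw [this, hBDC]
  have hfin : (((-M).det : ℤ) : ℚ) = ((b * ∏ i, p i (r i)
      - ∑ i, q i (r i) * ∏ j ∈ Finset.univ.erase i, p j (r j) : ℤ) : ℚ) := by
    rw [hdetfinal]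
    push_cast
    rw [mul_sub, Finset.mul_sum]
    congr 1
    · ring
    · refine Finset.sum_congr rfl fun i _ => ?_
      rw [← Finset.mul_prod_erase Finset.univ (fun j => ((p j (r j):ℤ):ℚ))
        (Finset.mem_univ i)]
      field_simp [hPne i]
  exact_mod_cast hfin
end

section
/- Let Γ be the star-shaped graph with central vertex of weight -b and n arms with weights -b_{ij} ≤ -2 as above. If b ≥ n + 1, then the intersection matrix M(Γ) is negative definite. -/
/-!
Write `c` for the coordinate of the central vertex and `y_{i,0}, …, y_{i,r_i-1}` for those of
arm `i`, with `y_{i,r_i} = 0`. Splitting `b c²` as `(b - n) c² + n · c²` gives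
`xᵀ(-M)x = (b - n) c² + ∑ᵢ Qᵢ`, where `Qᵢ` is the form of the chain `c – y_{i,0} – … – y_{i,r_i-1}`
with weights `1, a_{i,1}, …`, and
`Qᵢ = (c - y_{i,0})² + ∑ₖ ((y_{i,k} - y_{i,k+1})² + (a_{i,k+1} - 2) y_{i,k}²)`.
All terms are nonnegative; if `Qᵢ = 0` then `y_{i,·}` is constant and ends in `0`, so it vanishes.
-/

open Finset Matrix

/-- The form of the chain `c – Z 0 – … – Z (m-1)` with weights `1, A 0, …, A (m-1)`, provided
`Z m = 0`. -/
def armForm (c : ℝ) (A Z : ℕ → ℝ) (m : ℕ) : ℝ :=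
  c ^ 2 - 2 * c * Z 0 + ∑ k ∈ range m, (A k * Z k ^ 2 - 2 * Z k * Z (k + 1))

lemma armForm_eq_sum_sq (c : ℝ) (A Z : ℕ → ℝ) {m : ℕ} (hZ : Z m = 0) :
    armForm c A Z m =
      (c - Z 0) ^ 2 + ∑ k ∈ range m, ((Z k - Z (k + 1)) ^ 2 + (A k - 2) * Z k ^ 2) := by
  have hshift : ∑ k ∈ range m, Z (k + 1) ^ 2 = ∑ k ∈ range m, Z k ^ 2 - Z 0 ^ 2 := by
    have := (sum_range_succ' (fun k => Z k ^ 2) m).symm.trans (sum_range_succ _ m)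
    rw [hZ] at this
    linarith
  have hexpand : ∑ k ∈ range m, ((Z k - Z (k + 1)) ^ 2 + (A k - 2) * Z k ^ 2) =
      ∑ k ∈ range m, (A k * Z k ^ 2 - 2 * Z k * Z (k + 1)) - ∑ k ∈ range m, Z k ^ 2 +
        ∑ k ∈ range m, Z (k + 1) ^ 2 := by
    rw [← sum_sub_distrib, ← sum_add_distrib]
    exact sum_congr rfl fun k _ => by ring
  rw [armForm, hexpand, hshift]
  ring

section ArmForm

variable (c : ℝ) {A Z : ℕ → ℝ} {m : ℕ} (hA : ∀ k < m, 2 ≤ A k) (hZ : Z m = 0)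
include hA hZ

lemma armForm_nonneg : 0 ≤ armForm c A Z m := by
  rw [armForm_eq_sum_sq c A Z hZ]
  exact add_nonneg (sq_nonneg _) (sum_nonneg fun k hk =>
    add_nonneg (sq_nonneg _) (mul_nonneg (by linarith [hA k (mem_range.1 hk)]) (sq_nonneg _)))

lemma armForm_pos {k₀ : ℕ} (hk₀ : k₀ < m) (hZk₀ : Z k₀ ≠ 0) : 0 < armForm c A Z m := by
  rw [armForm_eq_sum_sq c A Z hZ]
  have hterm : ∀ k ∈ range m, 0 ≤ (Z k - Z (k + 1)) ^ 2 + (A k - 2) * Z k ^ 2 := fun k hk =>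
    add_nonneg (sq_nonneg _) (mul_nonneg (by linarith [hA k (mem_range.1 hk)]) (sq_nonneg _))
  by_contra! hle
  have hsum : ∑ k ∈ range m, ((Z k - Z (k + 1)) ^ 2 + (A k - 2) * Z k ^ 2) = 0 :=
    le_antisymm (by nlinarith [sq_nonneg (c - Z 0)]) (sum_nonneg hterm)
  have hstep : ∀ k < m, Z k = Z (k + 1) := fun k hk => by
    have := (sum_eq_zero_iff_of_nonneg hterm).1 hsum k (mem_range.2 hk)
    nlinarith [sq_nonneg (Z k - Z (k + 1)), mul_nonneg (sub_nonneg.2 (hA k hk)) (sq_nonneg (Z k))]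
  have hvanish : ∀ k ≤ m, Z k = 0 := fun k hk =>
    Nat.decreasingInduction (motive := fun k _ => Z k = 0)
      (fun k hk ih => (hstep k hk).trans ih) hZ hk
  exact hZk₀ (hvanish k₀ hk₀.le)

end ArmForm

def chainEntry (A : ℕ → ℝ) (k l : ℕ) : ℝ :=
  (if l = k then -A k else 0) + (if l = k + 1 then 1 else 0) + (if k = l + 1 then 1 else 0)

lemma chainEntry_comm (A : ℕ → ℝ) (k l : ℕ) : chainEntry A k l = chainEntry A l k := by
  unfold chainEntry
  by_cases h : l = k
  · subst h; rfl
  · rw [if_neg h, if_neg (Ne.symm h)]; ring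

lemma eq_chainEntry_of_tridiagonal {m : ℕ} {N : Matrix (Fin m) (Fin m) ℝ} {A : ℕ → ℝ}
    (hdiag : ∀ j, N j j = -A j)
    (hadj : ∀ j k : Fin m, (j : ℕ) + 1 = k → N j k = 1 ∧ N k j = 1)
    (hfar : ∀ j k : Fin m, (j : ℕ) + 1 < k → N j k = 0 ∧ N k j = 0) (j k : Fin m) :
    N j k = chainEntry A j k := by
  rcases lt_trichotomy (j : ℕ) k with h | h | h
  · rcases (Nat.succ_le_of_lt h).eq_or_lt with h' | h'
    · rw [(hadj j k h').1, chainEntry, if_neg h.ne', if_pos h'.symm, if_neg (by omega)]; ring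
    · rw [(hfar j k h').1, chainEntry, if_neg h.ne', if_neg (by omega), if_neg (by omega)]; ring
  · rw [Fin.ext h, hdiag]; simp [chainEntry]
  · rcases (Nat.succ_le_of_lt h).eq_or_lt with h' | h'
    · rw [(hadj k j h').2, chainEntry, if_neg h.ne, if_neg (by omega), if_pos h'.symm]; ring
    · rw [(hfar k j h').2, chainEntry, if_neg h.ne, if_neg (by omega), if_neg (by omega)]; ring

lemma sum_range_ite_eq_mul {Z : ℕ → ℝ} {m : ℕ} (hZ : ∀ k, m ≤ k → Z k = 0) (t : ℕ) (c : ℝ) :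
    ∑ l ∈ range m, (if l = t then c else 0) * Z l = c * Z t := by
  simp only [ite_mul, zero_mul, sum_ite_eq', mem_range]
  split_ifs with h
  · rfl
  · rw [hZ t (not_lt.1 h), mul_zero]

lemma sum_mul_sum_chainEntry_mul (A : ℕ → ℝ) {Z : ℕ → ℝ} {m : ℕ} (hZ : ∀ k, m ≤ k → Z k = 0) :
    ∑ k ∈ range m, Z k * ∑ l ∈ range m, chainEntry A k l * Z l =
      -∑ k ∈ range m, (A k * Z k ^ 2 - 2 * Z k * Z (k + 1)) := by
  have hbackward : ∑ k ∈ range m, Z k * ∑ l ∈ range m, (if k = l + 1 then 1 else 0) * Z l =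
      ∑ l ∈ range m, Z l * Z (l + 1) := by
    simp only [mul_sum]
    rw [sum_comm]
    refine sum_congr rfl fun l _ => ?_
    rw [← one_mul (Z (l + 1)), ← sum_range_ite_eq_mul hZ (l + 1), mul_sum]
    exact sum_congr rfl fun k _ => by ring
  have hrow : ∀ k, ∑ l ∈ range m, chainEntry A k l * Z l =
      -A k * Z k + Z (k + 1) + ∑ l ∈ range m, (if k = l + 1 then 1 else 0) * Z l := by
    intro k
    simp only [chainEntry, add_mul, sum_add_distrib, sum_range_ite_eq_mul hZ, one_mul]
  calc ∑ k ∈ range m, Z k * ∑ l ∈ range m, chainEntry A k l * Z l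
      = ∑ k ∈ range m, (Z k * (-A k * Z k + Z (k + 1)) +
          Z k * ∑ l ∈ range m, (if k = l + 1 then 1 else 0) * Z l) :=
        sum_congr rfl fun k _ => by rw [hrow, mul_add]
    _ = ∑ k ∈ range m, Z k * (-A k * Z k + Z (k + 1)) + ∑ k ∈ range m, Z k * Z (k + 1) := by
        rw [sum_add_distrib, hbackward]
    _ = _ := by
        rw [← sum_add_distrib, ← sum_neg_distrib]
        exact sum_congr rfl fun k _ => by ring

section StarMatrix

variable {ι : Type*} {r : ι → ℕ}

def armCoord (x : Unit ⊕ (Σ i, Fin (r i)) → ℝ) (i : ι) (k : ℕ) : ℝ :=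
  if h : k < r i then x (.inr ⟨i, ⟨k, h⟩⟩) else 0

lemma armCoord_of_le (x : Unit ⊕ (Σ i, Fin (r i)) → ℝ) {i : ι} {k : ℕ} (hk : r i ≤ k) :
    armCoord x i k = 0 :=
  dif_neg hk.not_gt

lemma sum_fin_eq_sum_armCoord (x : Unit ⊕ (Σ i, Fin (r i)) → ℝ) (i : ι) (f : ℕ → ℝ → ℝ) :
    ∑ j : Fin (r i), f j (x (.inr ⟨i, j⟩)) = ∑ k ∈ range (r i), f k (armCoord x i k) := by
  rw [← Fin.sum_univ_eq_sum_range (fun k => f k (armCoord x i k))]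
  simp [armCoord]

variable [DecidableEq ι]

def starMatrix (r : ι → ℕ) (b : ℝ) (A : ι → ℕ → ℝ) :
    Matrix (Unit ⊕ Σ i, Fin (r i)) (Unit ⊕ Σ i, Fin (r i)) ℝ :=
  Matrix.of fun u v => match u, v with
  | .inl _, .inl _ => -b
  | .inl _, .inr ⟨_, j⟩ | .inr ⟨_, j⟩, .inl _ => if (j : ℕ) = 0 then 1 else 0
  | .inr ⟨i, j⟩, .inr ⟨i', j'⟩ => if i = i' then chainEntry (A i) j j' else 0

lemma starMatrix_isHermitian (b : ℝ) (A : ι → ℕ → ℝ) : (starMatrix r b A).IsHermitian := by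
  refine IsHermitian.ext ?_
  rintro (_ | ⟨i, j⟩) (_ | ⟨i', j'⟩)
  · rfl
  · rfl
  · rfl
  · by_cases h : i = i'
    · subst h
      simp [starMatrix, chainEntry_comm]
    · simp [starMatrix, h, Ne.symm h]

variable [Fintype ι]

lemma starMatrix_mulVec_inl (b : ℝ) (A : ι → ℕ → ℝ) (x : Unit ⊕ (Σ i, Fin (r i)) → ℝ) :
    (starMatrix r b A *ᵥ x) (.inl ()) = -b * x (.inl ()) + ∑ i, armCoord x i 0 := by
  simp only [mulVec, dotProduct, Fintype.sum_sum_type, Fintype.sum_unique, Fintype.sum_sigma]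
  simp only [starMatrix, PUnit.default_eq_unit, of_apply, neg_mul, add_right_inj]
  refine sum_congr rfl fun i _ => ?_
  rw [sum_fin_eq_sum_armCoord x i (fun k y => (if k = 0 then 1 else 0) * y),
    sum_range_ite_eq_mul (fun _ => armCoord_of_le x), one_mul]

lemma starMatrix_mulVec_inr (b : ℝ) (A : ι → ℕ → ℝ) (x : Unit ⊕ (Σ i, Fin (r i)) → ℝ)
    (i : ι) (j : Fin (r i)) :
    (starMatrix r b A *ᵥ x) (.inr ⟨i, j⟩) = (if (j : ℕ) = 0 then x (.inl ()) else 0) +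
      ∑ k ∈ range (r i), chainEntry (A i) j k * armCoord x i k := by
  simp only [mulVec, dotProduct, Fintype.sum_sum_type, Fintype.sum_unique, Fintype.sum_sigma]
  simp only [starMatrix, PUnit.default_eq_unit, of_apply, ite_mul, one_mul, zero_mul,
    sum_ite_irrel, sum_const_zero, sum_ite_eq, mem_univ, ↓reduceIte, add_right_inj]
  exact sum_fin_eq_sum_armCoord x i (fun k y => chainEntry (A i) j k * y)

lemma dotProduct_neg_starMatrix_mulVec (b : ℝ) (A : ι → ℕ → ℝ)
    (x : Unit ⊕ (Σ i, Fin (r i)) → ℝ) :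
    x ⬝ᵥ (-starMatrix r b A *ᵥ x) = (b - Fintype.card ι) * x (.inl ()) ^ 2 +
      ∑ i, armForm (x (.inl ())) (A i) (armCoord x i) (r i) := by
  set c := x (.inl ())
  have harm : ∀ i, ∑ j : Fin (r i), x (.inr ⟨i, j⟩) * (starMatrix r b A *ᵥ x) (.inr ⟨i, j⟩) =
      c * armCoord x i 0 - ∑ k ∈ range (r i), (A i k * armCoord x i k ^ 2 -
        2 * armCoord x i k * armCoord x i (k + 1)) := by
    intro i
    simp only [starMatrix_mulVec_inr]
    rw [sum_fin_eq_sum_armCoord x i (fun k y => y * ((if k = 0 then c else 0) +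
      ∑ l ∈ range (r i), chainEntry (A i) k l * armCoord x i l))]
    simp only [mul_add, sum_add_distrib,
      sum_mul_sum_chainEntry_mul (A i) (fun _ => armCoord_of_le x)]
    rw [sum_congr rfl fun k _ => mul_comm (armCoord x i k) _,
      sum_range_ite_eq_mul (fun _ => armCoord_of_le x), sub_eq_add_neg]
  rw [neg_mulVec, dotProduct_neg]
  simp only [dotProduct, Fintype.sum_sum_type, Fintype.sum_unique, Fintype.sum_sigma,
    PUnit.default_eq_unit, harm, starMatrix_mulVec_inl]
  simp only [armForm, sum_add_distrib, sum_sub_distrib, sum_const, card_univ, nsmul_eq_mul,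
    ← mul_sum]
  ring

lemma starMatrix_neg_posDef {b : ℝ} (hb : Fintype.card ι < b) {A : ι → ℕ → ℝ}
    (hA : ∀ i, ∀ k < r i, 2 ≤ A i k) : (-starMatrix r b A).PosDef := by
  refine posDef_iff_dotProduct_mulVec.2 ⟨(starMatrix_isHermitian b A).neg, fun x hx => ?_⟩
  rw [star_trivial, dotProduct_neg_starMatrix_mulVec]
  set c := x (.inl ())
  have hgap := sub_pos.2 hb
  have harm : ∀ i ∈ univ, 0 ≤ armForm c (A i) (armCoord x i) (r i) := fun i _ =>
    armForm_nonneg c (hA i) (armCoord_of_le x le_rfl)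
  obtain ⟨u, hu⟩ := Function.ne_iff.1 hx
  rcases u with ⟨⟩ | ⟨i, j⟩
  · have hc : c ≠ 0 := hu
    have : 0 < (b - Fintype.card ι) * c ^ 2 := by positivity
    linarith [sum_nonneg harm]
  · have := armForm_pos c (hA i) (armCoord_of_le x le_rfl) j.isLt (by simpa [armCoord] using hu)
    have : 0 ≤ (b - Fintype.card ι) * c ^ 2 := by positivity
    linarith [single_le_sum harm (mem_univ i)]

end StarMatrix

theorem stmt_9_general (n : ℕ) (b : ℤ) (hb : (n : ℤ) + 1 ≤ b)
    (r : Fin n → ℕ)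
    (a : Fin n → ℕ → ℤ) (ha : ∀ i k, 1 ≤ k → k ≤ r i → 2 ≤ a i k)
    (M : Matrix (Unit ⊕ (Σ i : Fin n, Fin (r i))) (Unit ⊕ (Σ i : Fin n, Fin (r i))) ℝ)
    (hcc : M (Sum.inl ()) (Sum.inl ()) = -(b : ℝ))
    (hca : ∀ (i : Fin n) (j : Fin (r i)),
      M (Sum.inl ()) (Sum.inr ⟨i, j⟩) = if (j : ℕ) = 0 then 1 else 0)
    (hac : ∀ (i : Fin n) (j : Fin (r i)),
      M (Sum.inr ⟨i, j⟩) (Sum.inl ()) = if (j : ℕ) = 0 then 1 else 0)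
    (hdiag : ∀ (i : Fin n) (j : Fin (r i)),
      M (Sum.inr ⟨i, j⟩) (Sum.inr ⟨i, j⟩) = -((a i ((j : ℕ) + 1) : ℤ) : ℝ))
    (hadj : ∀ (i : Fin n) (j k : Fin (r i)), (j : ℕ) + 1 = (k : ℕ) →
      M (Sum.inr ⟨i, j⟩) (Sum.inr ⟨i, k⟩) = 1 ∧ M (Sum.inr ⟨i, k⟩) (Sum.inr ⟨i, j⟩) = 1)
    (hfar : ∀ (i : Fin n) (j k : Fin (r i)), (j : ℕ) + 1 < (k : ℕ) →
      M (Sum.inr ⟨i, j⟩) (Sum.inr ⟨i, k⟩) = 0 ∧ M (Sum.inr ⟨i, k⟩) (Sum.inr ⟨i, j⟩) = 0)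
    (hdiff : ∀ (i i' : Fin n) (j : Fin (r i)) (j' : Fin (r i')), i ≠ i' →
      M (Sum.inr ⟨i, j⟩) (Sum.inr ⟨i', j'⟩) = 0) :
    (-M).PosDef := by
  have hM : M = starMatrix r b (fun i k => a i (k + 1)) := by
    ext (_ | ⟨i, j⟩) (_ | ⟨i', j'⟩)
    · exact hcc
    · exact hca i' j'
    · exact hac i j
    · by_cases h : i = i'
      · subst h
        simpa [starMatrix] using eq_chainEntry_of_tridiagonal (N := fun j k => M _ (.inr ⟨i, k⟩))
          (hdiag i) (hadj i) (hfar i) j j'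
      · simpa [starMatrix, h] using hdiff i i' j j' h
  rw [hM]
  exact starMatrix_neg_posDef (by rw [Fintype.card_fin]; exact_mod_cast Int.lt_of_add_one_le hb)
    fun i k hk => by exact_mod_cast ha i (k + 1) k.succ_pos hk

/-- If `b ≥ n + 1`, the intersection matrix of the star-shaped plumbing graph `Γ` with
central weight `-b` and `n` arms with weights `-a_{ij} ≤ -2` is negative definite. -/
theorem stmt_9 (n : ℕ) (b : ℤ) (hb : (n : ℤ) + 1 ≤ b)
    (r : Fin n → ℕ) (hr : ∀ i, 1 ≤ r i)
    (a : Fin n → ℕ → ℤ) (ha : ∀ i k, 1 ≤ k → k ≤ r i → 2 ≤ a i k)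
    (M : Matrix (Unit ⊕ (Σ i : Fin n, Fin (r i))) (Unit ⊕ (Σ i : Fin n, Fin (r i))) ℝ)
    (hcc : M (Sum.inl ()) (Sum.inl ()) = -(b : ℝ))
    (hca : ∀ (i : Fin n) (j : Fin (r i)),
      M (Sum.inl ()) (Sum.inr ⟨i, j⟩) = if (j : ℕ) = 0 then 1 else 0)
    (hac : ∀ (i : Fin n) (j : Fin (r i)),
      M (Sum.inr ⟨i, j⟩) (Sum.inl ()) = if (j : ℕ) = 0 then 1 else 0)
    (hdiag : ∀ (i : Fin n) (j : Fin (r i)),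
      M (Sum.inr ⟨i, j⟩) (Sum.inr ⟨i, j⟩) = -((a i ((j : ℕ) + 1) : ℤ) : ℝ))
    (hadj : ∀ (i : Fin n) (j k : Fin (r i)), (j : ℕ) + 1 = (k : ℕ) →
      M (Sum.inr ⟨i, j⟩) (Sum.inr ⟨i, k⟩) = 1 ∧ M (Sum.inr ⟨i, k⟩) (Sum.inr ⟨i, j⟩) = 1)
    (hfar : ∀ (i : Fin n) (j k : Fin (r i)), (j : ℕ) + 1 < (k : ℕ) →
      M (Sum.inr ⟨i, j⟩) (Sum.inr ⟨i, k⟩) = 0 ∧ M (Sum.inr ⟨i, k⟩) (Sum.inr ⟨i, j⟩) = 0)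
    (hdiff : ∀ (i i' : Fin n) (j : Fin (r i)) (j' : Fin (r i')), i ≠ i' →
      M (Sum.inr ⟨i, j⟩) (Sum.inr ⟨i', j'⟩) = 0) :
    (-M).PosDef :=
  stmt_9_general n b hb r a ha M hcc hca hac hdiag hadj hfar hdiff
end

section
/- Let P be a finite set of points and L a finite family of n ≥ 3 distinct 'lines' (subsets of P) such that any two distinct lines of L meet in exactly one point. Say a point is a multi-intersection point if it lies on at least 3 lines of L. Suppose (i) at most one point of P is a multi-intersection point, and (ii) some line s ∈ L contains at most 2 points that lie on another line of L. Then either all n lines share a common point, or there is a point lying on exactly n - 1 of the lines (all lines but one are concurrent). -/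
/-- In a finite arrangement of `n ≥ 3` lines pairwise meeting in exactly one point, with at
most one multi-intersection point (a point on at least 3 lines) and some line containing at
most 2 points lying on another line, either all lines are concurrent or some point lies on
exactly `n - 1` of the lines. -/
theorem stmt_13 {α : Type*} [Fintype α] [DecidableEq α] (n : ℕ) (hn : 3 ≤ n)
    (L : Finset (Finset α)) (hcard : L.card = n)
    (hmeet : ∀ s ∈ L, ∀ t ∈ L, s ≠ t → (s ∩ t).card = 1)
    (hmulti : ∀ p q : α, 3 ≤ (L.filter fun s => p ∈ s).card →
      3 ≤ (L.filter fun s => q ∈ s).card → p = q)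
    (hlow : ∃ s ∈ L, (s.filter fun p => ∃ t ∈ L, t ≠ s ∧ p ∈ t).card ≤ 2) :
    (∃ p : α, ∀ s ∈ L, p ∈ s) ∨ (∃ p : α, (L.filter fun s => p ∈ s).card = n - 1) := by
  classical
  obtain ⟨s, hs, hsF⟩ := hlow
  set T := L.erase s with hTdef
  have hTcard : T.card = n - 1 := by rw [hTdef, Finset.card_erase_of_mem hs, hcard]
  have hmemT : ∀ t ∈ T, t ∈ L ∧ t ≠ s := fun t ht =>
    ⟨Finset.mem_of_mem_erase ht, Finset.ne_of_mem_erase ht⟩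
  have hint : ∀ t ∈ T, ∃ p, s ∩ t = {p} := by
    intro t ht
    exact Finset.card_eq_one.mp (hmeet s hs t (hmemT t ht).1 (Ne.symm (hmemT t ht).2))
  have hTne : T.Nonempty := by
    rw [← Finset.card_pos, hTcard]; omega
  obtain ⟨t0, ht0⟩ := hTne
  obtain ⟨p0, hp0⟩ := hint t0 ht0
  have hp0m : p0 ∈ s ∩ t0 := hp0 ▸ Finset.mem_singleton_self p0
  have hp0s : p0 ∈ s := (Finset.mem_inter.mp hp0m).1
  have hp0t0 : p0 ∈ t0 := (Finset.mem_inter.mp hp0m).2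
  by_cases hall : ∀ t ∈ T, p0 ∈ t
  · left
    refine ⟨p0, fun u hu => ?_⟩
    by_cases h : u = s
    · exact h ▸ hp0s
    · exact hall u (Finset.mem_erase.mpr ⟨h, hu⟩)
  · push_neg at hall
    obtain ⟨t1, ht1, hp0t1⟩ := hall
    obtain ⟨p1, hp1⟩ := hint t1 ht1
    have hp1m : p1 ∈ s ∩ t1 := hp1 ▸ Finset.mem_singleton_self p1
    have hp1s : p1 ∈ s := (Finset.mem_inter.mp hp1m).1
    have hp1t1 : p1 ∈ t1 := (Finset.mem_inter.mp hp1m).2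
    have hne01 : p0 ≠ p1 := fun h => hp0t1 (h ▸ hp1t1)
    have hFmem : ∀ t ∈ T, ∀ p, p ∈ s → p ∈ t →
        p ∈ s.filter fun p => ∃ t ∈ L, t ≠ s ∧ p ∈ t := by
      intro t ht p hps hpt
      exact Finset.mem_filter.mpr ⟨hps, t, (hmemT t ht).1, (hmemT t ht).2, hpt⟩
    have hpair : ({p0, p1} : Finset α) ⊆ s.filter fun p => ∃ t ∈ L, t ≠ s ∧ p ∈ t := by
      intro x hx
      rcases Finset.mem_insert.mp hx with h | h
      · exact h ▸ hFmem t0 ht0 p0 hp0s hp0t0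
      · exact (Finset.mem_singleton.mp h) ▸ hFmem t1 ht1 p1 hp1s hp1t1
    have hFeq : (s.filter fun p => ∃ t ∈ L, t ≠ s ∧ p ∈ t) = {p0, p1} :=
      (Finset.eq_of_subset_of_card_le hpair
        (by rw [Finset.card_pair hne01]; exact hsF)).symm
    have hkey : ∀ t ∈ T, (p0 ∈ t ∧ p1 ∉ t) ∨ (p1 ∈ t ∧ p0 ∉ t) := by
      intro t ht
      obtain ⟨q, hq⟩ := hint t ht
      have hqm : q ∈ s ∩ t := hq ▸ Finset.mem_singleton_self q
      have hqF : q ∈ ({p0, p1} : Finset α) :=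
        hFeq ▸ hFmem t ht q (Finset.mem_inter.mp hqm).1 (Finset.mem_inter.mp hqm).2
      have huniq : ∀ x, x ∈ s → x ∈ t → x = q := by
        intro x hxs hxt
        have hx : x ∈ s ∩ t := Finset.mem_inter.mpr ⟨hxs, hxt⟩
        rw [hq] at hx; exact Finset.mem_singleton.mp hx
      rcases Finset.mem_insert.mp hqF with h | h
      · subst h
        exact Or.inl ⟨(Finset.mem_inter.mp hqm).2,
          fun hp1t => hne01 ((huniq p1 hp1s hp1t).symm)⟩
      · rw [Finset.mem_singleton] at h; subst h
        exact Or.inr ⟨(Finset.mem_inter.mp hqm).2,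
          fun hp0t => hne01 (huniq p0 hp0s hp0t)⟩
    have hsplit : (T.filter fun t => p0 ∈ t).card + (T.filter fun t => p1 ∈ t).card
        = n - 1 := by
      have heq : (T.filter fun t => p1 ∈ t) = T.filter fun t => ¬ p0 ∈ t := by
        apply Finset.filter_congr
        intro t ht
        rcases hkey t ht with ⟨h1, h2⟩ | ⟨h1, h2⟩ <;> simp [h1, h2]
      rw [heq, Finset.card_filter_add_card_filter_not, hTcard]
    have hLfilter : ∀ p, p ∈ s →
        (L.filter fun u => p ∈ u).card = (T.filter fun u => p ∈ u).card + 1 := by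
      intro p hps
      have hL : L = insert s T := (Finset.insert_erase hs).symm
      rw [hL, Finset.filter_insert, if_pos hps, Finset.card_insert_of_notMem]
      intro hmem
      exact (Finset.mem_erase.mp (Finset.mem_filter.mp hmem).1).1 rfl
    have h1le : 1 ≤ (T.filter fun t => p0 ∈ t).card :=
      Finset.card_pos.mpr ⟨t0, Finset.mem_filter.mpr ⟨ht0, hp0t0⟩⟩
    have h2le : 1 ≤ (T.filter fun t => p1 ∈ t).card :=
      Finset.card_pos.mpr ⟨t1, Finset.mem_filter.mpr ⟨ht1, hp1t1⟩⟩
    have hnotboth : ¬ (2 ≤ (T.filter fun t => p0 ∈ t).card ∧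
        2 ≤ (T.filter fun t => p1 ∈ t).card) := by
      rintro ⟨h1, h2⟩
      apply hne01
      apply hmulti p0 p1
      · rw [hLfilter p0 hp0s]; omega
      · rw [hLfilter p1 hp1s]; omega
    right
    by_cases hc : (T.filter fun t => p1 ∈ t).card = 1
    · exact ⟨p0, by rw [hLfilter p0 hp0s]; omega⟩
    · exact ⟨p1, by rw [hLfilter p1 hp1s]; omega⟩
end
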